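/- arXiv:math/0605067 — 6 statements merged into one kernel-verified Lean document; each statement's English description precedes it below -/
import Mathlib

section
/- For every p ∈ Q⁰_λ and every A ⊆ λ, there exists q ∈ Q⁰_λ with p ≤⁰ q such that either A ∈ fil(q) or λ ∖ A ∈ fil(q). -/
open Set

noncomputable section

def IsUltrafilterOn {α : Type*} (Z : Set α) (d : Set (Set α)) : Prop :=
  (∀ A ∈ d, A ⊆ Z) ∧ Z ∈ d ∧ ∅ ∉ d ∧
  (∀ A B : Set α, A ∈ d → A ⊆ B → B ⊆ Z → B ∈ d) ∧
  (∀ A B : Set α, A ∈ d → B ∈ d → A ∩ B ∈ d) ∧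
  (∀ A : Set α, A ⊆ Z → (A ∈ d ∨ Z \ A ∈ d))

def IsNonprincipalOn {α : Type*} (Z : Set α) (d : Set (Set α)) : Prop :=
  IsUltrafilterOn Z d ∧ ∀ x : α, {x} ∉ d

def IsClubIn (C : Set Ordinal) (lam : Ordinal) : Prop :=
  C ⊆ Iio lam ∧ (∀ β < lam, ∃ δ ∈ C, β < δ) ∧
  (∀ β < lam, β ≠ 0 → sSup (C ∩ Iio β) = β → β ∈ C)

def nextIn (C : Set Ordinal) (δ : Ordinal) : Ordinal := sInf (C \ Iic δ)

/-- An element of `Q⁰_λ`: a club `C` of limit ordinals below `λ`, together with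
a non-principal ultrafilter `d δ` on the interval `Z_δ = [δ, min(C ∖ (δ+1)))` for each `δ ∈ C`. -/
structure QZero (lam : Ordinal) where
  C : Set Ordinal
  d : Ordinal → Set (Set Ordinal)
  club : IsClubIn C lam
  limit : ∀ δ ∈ C, Order.IsSuccLimit δ
  ultra : ∀ δ ∈ C, IsNonprincipalOn (Ico δ (nextIn C δ)) (d δ)

def QZero.Z {lam : Ordinal} (p : QZero lam) (δ : Ordinal) : Set Ordinal :=
  Ico δ (nextIn p.C δ)

def fil {lam : Ordinal} (p : QZero lam) : Set (Set Ordinal) :=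
  {A | A ⊆ Iio lam ∧ ∃ ε < lam, ∀ δ ∈ p.C, ε ≤ δ → A ∩ p.Z δ ∈ p.d δ}

def le0 {lam : Ordinal} (p q : QZero lam) : Prop := fil p ⊆ fil q

def filG {lam : Ordinal} (G : Set (QZero lam)) : Set (Set Ordinal) :=
  ⋃ p ∈ G, fil p

/-!
Let `S` be the set of `δ ∈ C^p` with `A ∩ Z^p_δ ∈ d^p_δ`. If `S` is bounded in `λ`, then
`λ ∖ A ∈ fil(p)` already. Otherwise the limit points of `S` form a club `C' ⊆ C^p` (as `cf λ > ω`).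
For `δ ∈ C'` the block `Z^p_s` of the next point `s` of `S` lies inside the new block
`[δ, min(C' ∖ (δ+1)))`, so `d^p_s` induces an ultrafilter on it. The resulting condition
`q` refines `p`, and `A ∈ fil(q)` because `A ∩ Z^p_s ∈ d^p_s` for every `s ∈ S`.
-/

open Cardinal

section Ultrafilter

variable {α : Type*} {Z W : Set α} {d : Set (Set α)}

lemma IsUltrafilterOn.diff_inter_mem (hd : IsUltrafilterOn Z d) (hZW : Z ⊆ W) {X : Set α}
    (hX : X ∩ Z ∉ d) : (W \ X) ∩ Z ∈ d := by
  have hcompl : (W \ X) ∩ Z = Z \ (X ∩ Z) := by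
    ext x
    constructor
    · rintro ⟨⟨-, hxX⟩, hxZ⟩
      exact ⟨hxZ, fun h => hxX h.1⟩
    · rintro ⟨hxZ, hxXZ⟩
      exact ⟨⟨hZW hxZ, fun hxX => hxXZ ⟨hxX, hxZ⟩⟩, hxZ⟩
  obtain ⟨-, -, -, -, -, hdich⟩ := hd
  rw [hcompl]
  exact (hdich _ inter_subset_right).resolve_left hX

def extendOn (W Z : Set α) (d : Set (Set α)) : Set (Set α) :=
  {X | X ⊆ W ∧ X ∩ Z ∈ d}

lemma IsNonprincipalOn.extendOn (hd : IsNonprincipalOn Z d) (hZW : Z ⊆ W) :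
    IsNonprincipalOn W (extendOn W Z d) := by
  obtain ⟨-, hZ, hempty, hmono, hinter, -⟩ := hd.1
  refine ⟨⟨fun X hX => hX.1, ⟨subset_rfl, ?_⟩, fun h => hempty (by simpa using h.2), ?_, ?_, ?_⟩,
    ?_⟩
  · rwa [inter_eq_self_of_subset_right hZW]
  · exact fun X Y hX hXY hYW =>
      ⟨hYW, hmono _ _ hX.2 (inter_subset_inter_left _ hXY) inter_subset_right⟩
  · intro X Y hX hY
    refine ⟨inter_subset_left.trans hX.1, ?_⟩
    rw [inter_inter_distrib_right]
    exact hinter _ _ hX.2 hY.2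
  · intro X hXW
    by_cases hXZ : X ∩ Z ∈ d
    · exact Or.inl ⟨hXW, hXZ⟩
    · exact Or.inr ⟨sdiff_subset, hd.1.diff_inter_mem hZW hXZ⟩
  · intro x hx
    rcases subset_singleton_iff_eq.1 (inter_subset_left : {x} ∩ Z ⊆ {x}) with h | h
    · exact hempty (h ▸ hx.2)
    · exact hd.2 x (h ▸ hx.2)

end Ultrafilter

section OrdinalSets

variable {S C : Set Ordinal} {β γ δ lam : Ordinal}

lemma sSup_inter_Iio_eq_iff : sSup (S ∩ Iio β) = β ↔ ∀ γ < β, ∃ s ∈ S, γ < s ∧ s < β := by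
  constructor
  · intro h γ hγ
    obtain ⟨s, ⟨hsS, hsβ⟩, hγs⟩ := exists_lt_of_lt_csSup' (h.symm ▸ hγ)
    exact ⟨s, hsS, hγs, hsβ⟩
  · intro h
    refine le_antisymm (csSup_le' fun _ hx => hx.2.le) (le_of_forall_lt fun γ hγ => ?_)
    obtain ⟨s, hsS, hγs, hsβ⟩ := h γ hγ
    exact hγs.trans_le (le_csSup ⟨β, fun _ hx => hx.2.le⟩ ⟨hsS, hsβ⟩)

lemma nextIn_mem_diff (h : ∃ γ ∈ C, δ < γ) : nextIn C δ ∈ C \ Iic δ :=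
  let ⟨γ, hγC, hδγ⟩ := h
  csInf_mem ⟨γ, hγC, not_le.2 hδγ⟩

lemma nextIn_mem (h : ∃ γ ∈ C, δ < γ) : nextIn C δ ∈ C :=
  (nextIn_mem_diff h).1

lemma lt_nextIn (h : ∃ γ ∈ C, δ < γ) : δ < nextIn C δ :=
  not_le.1 (nextIn_mem_diff h).2

lemma nextIn_le (hγC : γ ∈ C) (hδγ : δ < γ) : nextIn C δ ≤ γ :=
  csInf_le (OrderBot.bddBelow _) ⟨hγC, not_le.2 hδγ⟩

def accPts (S : Set Ordinal) (lam : Ordinal) : Set Ordinal :=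
  {β | β < lam ∧ β ≠ 0 ∧ sSup (S ∩ Iio β) = β}

lemma accPts_subset (hC : IsClubIn C lam) (hSC : S ⊆ C) : accPts S lam ⊆ C := by
  rintro β ⟨hβ, hβ0, hβS⟩
  refine hC.2.2 β hβ hβ0 (sSup_inter_Iio_eq_iff.2 fun γ hγ => ?_)
  obtain ⟨s, hsS, hs⟩ := sSup_inter_Iio_eq_iff.1 hβS γ hγ
  exact ⟨s, hSC hsS, hs⟩

lemma mem_accPts_of_sSup_eq (hβ : β < lam) (hβ0 : β ≠ 0)
    (hβS : sSup (accPts S lam ∩ Iio β) = β) : β ∈ accPts S lam := by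
  refine ⟨hβ, hβ0, sSup_inter_Iio_eq_iff.2 fun γ hγ => ?_⟩
  obtain ⟨δ, ⟨-, -, hδS⟩, hγδ, hδβ⟩ := sSup_inter_Iio_eq_iff.1 hβS γ hγ
  obtain ⟨s, hsS, hγs, hsδ⟩ := sSup_inter_Iio_eq_iff.1 hδS γ hγδ
  exact ⟨s, hsS, hγs, hsδ.trans hδβ⟩

/-- The supremum of the `ω`-iteration of `nextIn S` above `β` is a limit point of `S`,
and it stays below `lam` because `lam` has uncountable cofinality. -/
lemma exists_mem_accPts_gt (hlam : ℵ₀ < lam.cof) (hS : S ⊆ Iio lam)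
    (hunb : ∀ β < lam, ∃ δ ∈ S, β < δ) (hβ : β < lam) : ∃ δ ∈ accPts S lam, β < δ := by
  have hstep : ∀ γ < lam, nextIn S γ ∈ S ∧ γ < nextIn S γ := fun γ hγ =>
    ⟨nextIn_mem (hunb γ hγ), lt_nextIn (hunb γ hγ)⟩
  set δ := Ordinal.nfp (nextIn S) β
  have hδ : δ < lam := Ordinal.nfp_lt_ord hlam (fun γ hγ => hS (hstep γ hγ).1) hβ
  have hiter : ∀ n, (nextIn S)^[n] β < lam := fun n =>
    (Ordinal.iterate_le_nfp _ β n).trans_lt hδ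
  have hβδ : β < δ := (hstep β hβ).2.trans_le (Ordinal.iterate_le_nfp _ β 1)
  refine ⟨δ, ⟨hδ, (pos_of_gt hβδ).ne', sSup_inter_Iio_eq_iff.2 fun γ hγ => ?_⟩, hβδ⟩
  obtain ⟨n, hγn⟩ := Ordinal.lt_nfp_iff.1 hγ
  obtain ⟨hsS, hns⟩ := hstep _ (hiter n)
  refine ⟨_, hsS, hγn.trans hns, ?_⟩
  calc nextIn S ((nextIn S)^[n] β)
      = (nextIn S)^[n + 1] β := (Function.iterate_succ_apply' ..).symm
    _ < (nextIn S)^[n + 2] β := by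
        rw [Function.iterate_succ_apply' _ (n + 1)]
        exact (hstep _ (hiter (n + 1))).2
    _ ≤ δ := Ordinal.iterate_le_nfp _ β _

lemma isClubIn_accPts (hlam : ℵ₀ < lam.cof) (hS : S ⊆ Iio lam)
    (hunb : ∀ β < lam, ∃ δ ∈ S, β < δ) : IsClubIn (accPts S lam) lam :=
  ⟨fun _ hβ => hβ.1, fun _ hβ => exists_mem_accPts_gt hlam hS hunb hβ,
    fun _ hβ hβ0 hβS => mem_accPts_of_sSup_eq hβ hβ0 hβS⟩

lemma nextIn_lt_nextIn_accPts (h : ∃ γ ∈ accPts S lam, δ < γ) :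
    nextIn S δ < nextIn (accPts S lam) δ := by
  obtain ⟨-, -, hS⟩ := nextIn_mem h
  obtain ⟨s, hsS, hδs, hs⟩ := sSup_inter_Iio_eq_iff.1 hS δ (lt_nextIn h)
  exact (nextIn_le hsS hδs).trans_lt hs

end OrdinalSets

namespace QZero

variable {lam δ : Ordinal}

lemma Z_subset_Iio (p : QZero lam) (hδ : δ ∈ p.C) : p.Z δ ⊆ Iio lam := fun _ hx =>
  hx.2.trans (p.club.1 (nextIn_mem (p.club.2.1 δ (p.club.1 hδ))))

lemma Z_nextIn_subset (p : QZero lam) {S : Set Ordinal} (hSC : S ⊆ p.C)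
    (hunb : ∀ β < lam, ∃ δ ∈ S, β < δ) (hδ : δ < lam) (hnext : ∃ γ ∈ accPts S lam, δ < γ) :
    p.Z (nextIn S δ) ⊆ Ico δ (nextIn (accPts S lam) δ) := by
  have hSnext := nextIn_lt_nextIn_accPts hnext
  refine Ico_subset_Ico (lt_nextIn (hunb δ hδ)).le (nextIn_le ?_ hSnext)
  exact accPts_subset p.club hSC (nextIn_mem hnext)

variable (p : QZero lam) (hlam : ℵ₀ < lam.cof) {S : Set Ordinal} (hSC : S ⊆ p.C)
  (hunb : ∀ β < lam, ∃ δ ∈ S, β < δ)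

def thin : QZero lam where
  C := accPts S lam
  d δ := extendOn (Ico δ (nextIn (accPts S lam) δ)) (p.Z (nextIn S δ)) (p.d (nextIn S δ))
  club := isClubIn_accPts hlam (hSC.trans p.club.1) hunb
  limit δ hδ := p.limit δ (accPts_subset p.club hSC hδ)
  ultra δ hδ := (p.ultra _ (hSC (nextIn_mem (hunb δ hδ.1)))).extendOn <|
    p.Z_nextIn_subset hSC hunb hδ.1 (exists_mem_accPts_gt hlam (hSC.trans p.club.1) hunb hδ.1)

lemma mem_fil_thin {X : Set Ordinal} (hX : X ⊆ Iio lam)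
    (hXS : ∃ ε < lam, ∀ δ ∈ S, ε ≤ δ → X ∩ p.Z δ ∈ p.d δ) :
    X ∈ fil (p.thin hlam hSC hunb) := by
  obtain ⟨ε, hε, hXε⟩ := hXS
  refine ⟨hX, ε, hε, fun δ hδ hεδ => ⟨inter_subset_right, ?_⟩⟩
  have hsub := p.Z_nextIn_subset hSC hunb hδ.1 ((p.thin hlam hSC hunb).club.2.1 δ hδ.1)
  change X ∩ Ico δ (nextIn (accPts S lam) δ) ∩ p.Z (nextIn S δ) ∈ p.d (nextIn S δ)
  rw [inter_assoc, inter_eq_self_of_subset_right hsub]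
  exact hXε _ (nextIn_mem (hunb δ hδ.1)) (hεδ.trans (lt_nextIn (hunb δ hδ.1)).le)

lemma le0_thin : le0 p (p.thin hlam hSC hunb) := fun _ ⟨hX, ε, hε, hXε⟩ =>
  p.mem_fil_thin hlam hSC hunb hX ⟨ε, hε, fun δ hδ => hXε δ (hSC hδ)⟩

end QZero

/-- For every `p ∈ Q⁰_λ` and `A ⊆ λ` there is `q ∈ Q⁰_λ` with `p ≤⁰ q` such that
either `A ∈ fil(q)` or `λ ∖ A ∈ fil(q)`. -/
theorem statement2 (κ : Cardinal) (hreg : κ.IsRegular) (hunc : Cardinal.aleph0 < κ)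
    (p : QZero κ.ord) (A : Set Ordinal) (hA : A ⊆ Iio κ.ord) :
    ∃ q : QZero κ.ord, le0 p q ∧ (A ∈ fil q ∨ (Iio κ.ord \ A) ∈ fil q) := by
  set S : Set Ordinal := {δ ∈ p.C | A ∩ p.Z δ ∈ p.d δ}
  have hSC : S ⊆ p.C := fun _ hδ => hδ.1
  by_cases hunb : ∀ β < κ.ord, ∃ δ ∈ S, β < δ
  · have hlam : ℵ₀ < κ.ord.cof := by rwa [hreg.cof_ord]
    refine ⟨p.thin hlam hSC hunb, p.le0_thin hlam hSC hunb, Or.inl ?_⟩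
    exact p.mem_fil_thin hlam hSC hunb hA ⟨0, ord_pos.2 hreg.pos, fun δ hδ _ => hδ.2⟩
  · -- `S` is bounded, so `λ ∖ A ∈ fil p` already
    push Not at hunb
    obtain ⟨β, hβ, hSβ⟩ := hunb
    obtain ⟨ε, hεC, hβε⟩ := p.club.2.1 β hβ
    refine ⟨p, subset_rfl, Or.inr ⟨sdiff_subset, ε, p.club.1 hεC, fun δ hδ hεδ => ?_⟩⟩
    refine (p.ultra δ hδ).1.diff_inter_mem (p.Z_subset_Iio hδ) fun hAδ => ?_
    exact (hSβ δ ⟨hδ, hAδ⟩).not_gt (hβε.trans_le hεδ)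
end
end

section
/- A uniform ultrafilter D on λ is weakly reasonable if and only if for every increasing continuous sequence ⟨δ_ξ : ξ < λ⟩ of ordinals below λ there is a club C* of λ such that ⋃{ [δ_ξ, δ_{ξ+1}) : ξ ∈ C* } ∉ D. -/
open Set

noncomputable section

/-! For `⇒`, apply weak reasonableness to `f ξ = δ_{ξ+1}`: a strictly increasing sequence
satisfies `ξ ≤ δ_ξ`, so each block `[δ_ξ, δ_{ξ+1})` lies inside `[ξ, ξ + f ξ)`.
For `⇐`, iterate `x ↦ x + f x + 1` transfinitely (suprema at limits). This gives a normal
function `δ`, which stays below `λ` by regularity, and `[δ_ξ, δ_ξ + f δ_ξ) ⊆ [δ_ξ, δ_{ξ+1})`.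
The image of a club under a normal function mapping `λ` into `λ` is again a club. -/

open Cardinal Ordinal Order

theorem IsUltrafilterOn.notMem_of_subset {α : Type*} {Z : Set α} {d : Set (Set α)}
    (hd : IsUltrafilterOn Z d) {A B : Set α} (hAB : A ⊆ B) (hB : B ⊆ Z) (hBd : B ∉ d) :
    A ∉ d :=
  fun hA ↦ hBd (hd.2.2.2.1 A B hA hAB hB)

theorem StrictMonoOn.le_apply_of_lt {α : Type*} [LinearOrder α] [WellFoundedLT α] {o : α}
    {f : α → α} (hf : StrictMonoOn f (Iio o)) {ξ : α} (hξ : ξ < o) : ξ ≤ f ξ := by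
  induction ξ using WellFoundedLT.induction with
  | _ ξ IH =>
    by_contra! h
    exact (hf (h.trans hξ) hξ h).not_ge (IH _ h (h.trans hξ))

theorem IsClubIn.image_of_isNormal {C : Set Ordinal} {lam : Ordinal} {F : Ordinal → Ordinal}
    (hC : IsClubIn C lam) (hF : IsNormal F) (hlt : ∀ ξ < lam, F ξ < lam) :
    IsClubIn (F '' C) lam := by
  refine ⟨?_, fun β hβ ↦ ?_, fun β hβ hβ0 hsup ↦ ?_⟩
  · rintro _ ⟨ξ, hξ, rfl⟩
    exact hlt ξ (hC.1 hξ)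
  · obtain ⟨ξ, hξ, hβξ⟩ := hC.2.1 β hβ
    exact ⟨F ξ, mem_image_of_mem F hξ, hβξ.trans_le hF.strictMono.le_apply⟩
  set T := C ∩ F ⁻¹' Iio β
  have hT : F '' T = F '' C ∩ Iio β := image_inter_preimage F C (Iio β)
  have hTne : T.Nonempty := by
    by_contra! h
    rw [h, image_empty] at hT
    rw [← hT, csSup_empty] at hsup
    exact hβ0 hsup.symm
  have hTbdd : BddAbove T := ⟨β, fun ξ hξ ↦ (hF.strictMono.le_apply.trans_lt hξ.2).le⟩
  have hFT : F (sSup T) = β := by rw [hF.map_sSup hTne hTbdd, hT, hsup]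
  have hT_sub : T ⊆ C ∩ Iio (sSup T) := fun ξ hξ ↦
    ⟨hξ.1, hF.strictMono.lt_iff_lt.1 (hFT ▸ hξ.2)⟩
  refine ⟨sSup T, hC.2.2 _ ?_ ?_ ?_, hFT⟩
  · exact hF.strictMono.le_apply.trans_lt (hFT ▸ hβ)
  · exact (hT_sub hTne.some_mem).2.ne_bot
  · exact le_antisymm (csSup_le' fun _ hξ ↦ hξ.2.le)
      (csSup_le_csSup ⟨_, fun _ hξ ↦ hξ.2.le⟩ hTne hT_sub)

def transfiniteIter (g : Ordinal.{u} → Ordinal.{u}) (ξ : Ordinal.{u}) : Ordinal.{u} :=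
  limitRecOn ξ 0 (fun _ x ↦ g x) fun o _ IH ↦ ⨆ a : Iio o, IH a a.2

section transfiniteIter

variable {g : Ordinal.{u} → Ordinal.{u}}

theorem transfiniteIter_zero : transfiniteIter g 0 = 0 :=
  limitRecOn_zero ..

theorem transfiniteIter_add_one (ξ : Ordinal) :
    transfiniteIter g (ξ + 1) = g (transfiniteIter g ξ) :=
  limitRecOn_add_one ..

theorem transfiniteIter_of_isSuccLimit {ξ : Ordinal} (hξ : IsSuccLimit ξ) :
    transfiniteIter g ξ = ⨆ a : Iio ξ, transfiniteIter g a :=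
  limitRecOn_limit _ _ _ _ hξ

theorem isNormal_transfiniteIter (hg : ∀ x, x < g x) : IsNormal (transfiniteIter g) := by
  refine .of_succ_lt (fun ξ ↦ ?_) (fun {ξ} hξ ↦ ?_)
  · rw [succ_eq_add_one, transfiniteIter_add_one]
    exact hg _
  · have : Nonempty (Iio ξ) := ⟨⟨0, hξ.bot_lt⟩⟩
    rw [transfiniteIter_of_isSuccLimit hξ, image_eq_range]
    exact isLUB_ciSup Ordinal.bddAbove_of_small

theorem transfiniteIter_lt_ord {c : Cardinal.{u}} (hc : c.IsRegular)
    (hg : ∀ x < c.ord, g x < c.ord) {ξ : Ordinal.{u}} :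
    ξ < c.ord → transfiniteIter g ξ < c.ord := by
  induction ξ using limitRecOn with
  | zero =>
    rw [transfiniteIter_zero]
    exact id
  | add_one ξ IH =>
    intro hξ
    rw [transfiniteIter_add_one]
    exact hg _ (IH ((lt_add_one ξ).trans hξ))
  | limit ξ hξ IH =>
    intro hξc
    rw [transfiniteIter_of_isSuccLimit hξ]
    apply Ordinal.lift_iSup_lt_of_lt_cof
    · rwa [← lift_cof, hc.cof_ord, Cardinal.mk_Iio_ordinal, Cardinal.lift_lift,
        Cardinal.lift_lt, ← lt_ord]
    · exact fun a ↦ IH a.1 a.2 (a.2.trans hξc)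

end transfiniteIter

theorem Cardinal.IsRegular.exists_isNormal_add_lt_add_one {κ : Cardinal.{u}} (hκ : κ.IsRegular)
    {f : Ordinal.{u} → Ordinal.{u}} (hf : ∀ α < κ.ord, f α < κ.ord) :
    ∃ δs : Ordinal → Ordinal, IsNormal δs ∧ (∀ ξ < κ.ord, δs ξ < κ.ord) ∧
      ∀ ξ, δs ξ + f (δs ξ) < δs (ξ + 1) := by
  refine ⟨transfiniteIter fun x ↦ x + f x + 1,
    isNormal_transfiniteIter fun x ↦ le_self_add.trans_lt (lt_add_one _),
    fun ξ ↦ transfiniteIter_lt_ord hκ fun x hx ↦ ?_, fun ξ ↦ ?_⟩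
  · exact (isSuccLimit_ord hκ.aleph0_le).add_one_lt
      (isPrincipal_add_ord hκ.aleph0_le hx (hf x hx))
  · rw [transfiniteIter_add_one]
    exact lt_add_one _

def IsWeaklyReasonable (κ : Cardinal.{u}) (D : Set (Set Ordinal.{u})) : Prop :=
  ∀ f : Ordinal → Ordinal, (∀ α < κ.ord, f α < κ.ord) →
    ∃ C : Set Ordinal, IsClubIn C κ.ord ∧ (⋃ δ ∈ C, Ico δ (δ + f δ)) ∉ D

section

variable {κ : Cardinal.{u}} {D : Set (Set Ordinal.{u})}

theorem IsWeaklyReasonable.exists_club_iUnion_Ico_notMem (hκ : ℵ₀ ≤ κ)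
    (hD : IsUltrafilterOn (Iio κ.ord) D) (hwr : IsWeaklyReasonable κ D)
    {δs : Ordinal → Ordinal} (hlt : ∀ ξ < κ.ord, δs ξ < κ.ord)
    (hmono : ∀ ξ ζ : Ordinal, ξ < ζ → ζ < κ.ord → δs ξ < δs ζ) :
    ∃ Cs : Set Ordinal, IsClubIn Cs κ.ord ∧ (⋃ ξ ∈ Cs, Ico (δs ξ) (δs (ξ + 1))) ∉ D := by
  have hsucc : ∀ ξ < κ.ord, δs (ξ + 1) < κ.ord := fun ξ hξ ↦
    hlt _ ((isSuccLimit_ord hκ).add_one_lt hξ)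
  obtain ⟨C, hC, hCD⟩ := hwr (fun ξ ↦ δs (ξ + 1)) hsucc
  refine ⟨C, hC, hD.notMem_of_subset ?_ ?_ hCD⟩
  · refine iUnion₂_mono fun ξ hξ ↦ Ico_subset_Ico ?_ le_add_self
    exact StrictMonoOn.le_apply_of_lt (fun a _ b hb hab ↦ hmono a b hab hb) (hC.1 hξ)
  · refine iUnion₂_subset fun ξ hξ ↦ Ico_subset_Iio_self.trans (Iio_subset_Iio ?_)
    exact (isPrincipal_add_ord hκ (hC.1 hξ) (hsucc ξ (hC.1 hξ))).le

theorem isWeaklyReasonable_of_exists_club_iUnion_Ico_notMem (hκ : κ.IsRegular)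
    (hD : IsUltrafilterOn (Iio κ.ord) D)
    (h : ∀ δs : Ordinal → Ordinal, (∀ ξ < κ.ord, δs ξ < κ.ord) →
      (∀ ξ ζ : Ordinal, ξ < ζ → ζ < κ.ord → δs ξ < δs ζ) →
      (∀ ξ < κ.ord, IsSuccLimit ξ → δs ξ = sSup (δs '' Iio ξ)) →
      ∃ Cs : Set Ordinal, IsClubIn Cs κ.ord ∧ (⋃ ξ ∈ Cs, Ico (δs ξ) (δs (ξ + 1))) ∉ D) :
    IsWeaklyReasonable κ D := by
  intro f hf
  obtain ⟨δs, hN, hlt, hsucc⟩ := hκ.exists_isNormal_add_lt_add_one hf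
  obtain ⟨Cs, hCs, hCsD⟩ := h δs hlt (fun _ _ hξζ _ ↦ hN.strictMono hξζ)
    fun ξ _ hξ ↦ ((hN.isLUB_image_Iio_of_isSuccLimit hξ).csSup_eq
      (.image δs ⟨0, hξ.bot_lt⟩)).symm
  refine ⟨δs '' Cs, hCs.image_of_isNormal hN hlt, hD.notMem_of_subset ?_ ?_ hCsD⟩
  · rw [biUnion_image]
    exact iUnion₂_mono fun ξ _ ↦ Ico_subset_Ico_right (hsucc ξ).le
  · refine iUnion₂_subset fun ξ hξ ↦ Ico_subset_Iio_self.trans (Iio_subset_Iio ?_)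
    exact (hlt _ ((isSuccLimit_ord hκ.aleph0_le).add_one_lt (hCs.1 hξ))).le

end

theorem statement5_general (κ : Cardinal.{0}) (hreg : κ.IsRegular)
    (D : Set (Set Ordinal)) (hD : IsUltrafilterOn (Iio κ.ord) D) :
    (∀ f : Ordinal → Ordinal, (∀ α < κ.ord, f α < κ.ord) →
        ∃ C : Set Ordinal, IsClubIn C κ.ord ∧ (⋃ δ ∈ C, Ico δ (δ + f δ)) ∉ D)
    ↔
    (∀ δs : Ordinal → Ordinal, (∀ ξ < κ.ord, δs ξ < κ.ord) →
        (∀ ξ ζ : Ordinal, ξ < ζ → ζ < κ.ord → δs ξ < δs ζ) →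
        (∀ ξ < κ.ord, Order.IsSuccLimit ξ → δs ξ = sSup (δs '' Iio ξ)) →
        ∃ Cs : Set Ordinal, IsClubIn Cs κ.ord ∧
          (⋃ ξ ∈ Cs, Ico (δs ξ) (δs (ξ + 1))) ∉ D) :=
  ⟨fun hwr _ hlt hmono _ ↦
      IsWeaklyReasonable.exists_club_iUnion_Ico_notMem hreg.aleph0_le hD hwr hlt hmono,
    isWeaklyReasonable_of_exists_club_iUnion_Ico_notMem hreg hD⟩

/-- A uniform ultrafilter `D` on `λ` is weakly reasonable iff for every increasing
continuous sequence `⟨δ_ξ : ξ < λ⟩ ⊆ λ` there is a club `C*` of `λ` with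
`⋃ { [δ_ξ, δ_{ξ+1}) : ξ ∈ C* } ∉ D`. -/
theorem statement5 (κ : Cardinal.{0}) (hreg : κ.IsRegular) (hunc : Cardinal.aleph0 < κ)
    (D : Set (Set Ordinal)) (hD : IsUltrafilterOn (Iio κ.ord) D)
    (huni : ∀ A ∈ D, Cardinal.mk ↥A = Cardinal.lift.{1,0} κ) :
    (∀ f : Ordinal → Ordinal, (∀ α < κ.ord, f α < κ.ord) →
        ∃ C : Set Ordinal, IsClubIn C κ.ord ∧ (⋃ δ ∈ C, Ico δ (δ + f δ)) ∉ D)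
    ↔
    (∀ δs : Ordinal → Ordinal, (∀ ξ < κ.ord, δs ξ < κ.ord) →
        (∀ ξ ζ : Ordinal, ξ < ζ → ζ < κ.ord → δs ξ < δs ζ) →
        (∀ ξ < κ.ord, Order.IsSuccLimit ξ → δs ξ = sSup (δs '' Iio ξ)) →
        ∃ Cs : Set Ordinal, IsClubIn Cs κ.ord ∧
          (⋃ ξ ∈ Cs, Ico (δs ξ) (δs (ξ + 1))) ∉ D) :=
  statement5_general κ hreg D hD
end
end

section
/- For r, s ∈ Q*_λ: r ≤* s (i.e., fil*(r) ⊆ fil*(s)) if and only if there is ε < λ such that for every (α,Z,d) ∈ s with α > ε and every A ∈ d, there exists (α',Z',d') ∈ r with A ∩ Z' ∈ d'. -/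
open Set

noncomputable section

/-- `r ∈ Q*_λ`: a family of triples `(α, Z, d)` with `α < λ`, `Z ⊆ [α, λ)` infinite of
size `< λ`, `d` a non-principal ultrafilter on `Z`, only `< λ` triples per first
coordinate, and `|r| = λ`. -/
def IsQStar (κ : Cardinal.{0}) (r : Set (Ordinal × Set Ordinal × Set (Set Ordinal))) : Prop :=
  (∀ t ∈ r, t.1 < κ.ord ∧ t.2.1 ⊆ Ico t.1 κ.ord ∧
      Cardinal.aleph0 ≤ Cardinal.mk ↥t.2.1 ∧ Cardinal.mk ↥t.2.1 < Cardinal.lift.{1,0} κ ∧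
      IsNonprincipalOn t.2.1 t.2.2) ∧
  (∀ ξ < κ.ord, Cardinal.mk ↥{t | t ∈ r ∧ t.1 = ξ} < Cardinal.lift.{1,0} κ) ∧
  Cardinal.mk ↥r = Cardinal.lift.{1,0} κ

def filStar (κ : Cardinal.{0}) (r : Set (Ordinal × Set Ordinal × Set (Set Ordinal))) :
    Set (Set Ordinal) :=
  {A | A ⊆ Iio κ.ord ∧ ∃ ε < κ.ord, ∀ t ∈ r, ε ≤ t.1 → A ∩ t.2.1 ∈ t.2.2}

def StronglyDisjoint (r : Set (Ordinal × Set Ordinal × Set (Set Ordinal))) : Prop :=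
  (∀ t₁ ∈ r, ∀ t₂ ∈ r, t₁.1 = t₂.1 → t₁ = t₂) ∧
  (∀ t₁ ∈ r, ∀ t₂ ∈ r, t₁.1 < t₂.1 → t₁.2.1 ⊆ Iio t₂.1)

/-- `#(p) = { (α, Z^p_α, d^p_α) : α ∈ C^p }`. -/
def hashQ {lam : Ordinal} (p : QZero lam) : Set (Ordinal × Set Ordinal × Set (Set Ordinal)) :=
  {t | ∃ α ∈ p.C, t = (α, p.Z α, p.d α)}

/-!
If `A ∈ fil*(r)` from `ε₀` on, the fewer than `λ` triples of `r` starting below `ε₀` live below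
some `b < λ`. For `(α, Z, d) ∈ s` with `α` above `b` and `ε`, `A ∉ d` would give `Z ∖ A ∈ d` and a
triple `(α', Z', d') ∈ r` with `(Z ∖ A) ∩ Z' ∈ d'`; then `Z'` reaches above `b`, so `α' ≥ ε₀` and
`A ∩ Z' ∈ d'` too, which is absurd.

Conversely, if the condition fails, pick for each `e < λ` a triple of `s` starting above `e` with a
set `A_e` in its ultrafilter that is null for every ultrafilter of `r`, and let `Φ e < λ` bound
`A_e` and every `Z'` of `r` whose first coordinate is at most `e`. As `λ` is regular uncountable,
the `Φ`-closed ordinals `δ` are unbounded in `λ`, and each `Z'` of `r` meets at most one of the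
blocks `A_δ ⊆ (δ, Φ δ)`. So `λ ∖ ⋃_δ A_δ` lies in `fil*(r)` but not in `fil*(s)`.
-/

universe u

open Cardinal

namespace Cardinal.IsRegular

variable {κ : Cardinal.{u}}

theorem exists_lt_ord_subset_Iio (hκ : κ.IsRegular) {U : Set Ordinal.{u}}
    (hU : U ⊆ Iio κ.ord) (hcard : #U < Cardinal.lift.{u + 1} κ) : ∃ b < κ.ord, U ⊆ Iio b := by
  refine ⟨⨆ u : U, (u : Ordinal) + 1, ?_, fun u hu => ?_⟩
  · refine Ordinal.lift_iSup_add_one_lt_of_lt_cof ?_ fun u => hU u.2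
    rwa [Cardinal.lift_id'.{u, u + 1}, ← Ordinal.lift_cof, hκ.cof_ord]
  · have hbdd : BddAbove (range fun u : U => (u : Ordinal) + 1) :=
      ⟨κ.ord, forall_mem_range.2 fun u => Order.add_one_le_of_lt (hU u.2)⟩
    exact (Order.lt_add_one_iff.2 le_rfl).trans_le (le_ciSup hbdd ⟨u, hu⟩)

theorem exists_closure_point (hκ : κ.IsRegular) (hκ₀ : ℵ₀ < κ) {f : Ordinal.{u} → Ordinal.{u}}
    (hf : ∀ e < κ.ord, f e < κ.ord) {a : Ordinal.{u}} (ha : a < κ.ord) :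
    ∃ δ, a ≤ δ ∧ δ < κ.ord ∧ ∀ e < δ, f e < δ := by
  let g : Ordinal.{u} → Ordinal.{u} := fun x => ⨆ e : Iio x, f e + 1
  have hfg : ∀ x, ∀ e < x, f e < g x := fun x e he =>
    (Order.lt_add_one_iff.2 le_rfl).trans_le (Ordinal.le_iSup (fun e : Iio x => f e + 1) ⟨e, he⟩)
  have hg : ∀ x < κ.ord, g x < κ.ord := fun x hx => by
    refine Ordinal.lift_iSup_add_one_lt_of_lt_cof ?_ fun e => hf e (e.2.trans hx)
    rw [Cardinal.lift_id'.{u, u + 1}, mk_Iio_ordinal, ← Ordinal.lift_cof, hκ.cof_ord,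
      Cardinal.lift_lt]
    exact lt_ord.1 hx
  refine ⟨Ordinal.nfp g a, Ordinal.le_nfp g a,
    Cardinal.nfp_lt_ord_of_isRegular hκ hκ₀.ne' hg ha, fun e he => ?_⟩
  obtain ⟨n, hn⟩ := Ordinal.lt_nfp_iff.1 he
  have hle : g (g^[n] a) ≤ Ordinal.nfp g a := by
    simpa [Function.iterate_succ_apply'] using Ordinal.iterate_le_nfp g a (n + 1)
  exact (hfg _ e hn).trans_le hle

end Cardinal.IsRegular

namespace IsUltrafilterOn

variable {α : Type*} {Z : Set α} {d : Set (Set α)}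

theorem nonempty_of_mem (hd : IsUltrafilterOn Z d) {A : Set α} (hA : A ∈ d) : A.Nonempty :=
  nonempty_iff_ne_empty.2 fun h => hd.2.2.1 (h ▸ hA)

theorem inter_nonempty (hd : IsUltrafilterOn Z d) {A B : Set α} (hA : A ∈ d) (hB : B ∈ d) :
    (A ∩ B).Nonempty :=
  hd.nonempty_of_mem (hd.2.2.2.2.1 A B hA hB)

theorem diff_mem_of_inter_notMem (hd : IsUltrafilterOn Z d) {A : Set α} (hA : A ∩ Z ∉ d) :
    Z \ A ∈ d := by
  simpa [hA] using hd.2.2.2.2.2 (A ∩ Z) inter_subset_right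

end IsUltrafilterOn

theorem not_lt_of_inter_nonempty {β : Type*} [LinearOrder β] {Φ : β → β} {B B' Z : Set β}
    {α δ δ' : β} (hδ' : ∀ e < δ', Φ e < δ') (hB : B ⊆ Iio (Φ δ)) (hB' : B' ⊆ Ioi δ')
    (hZ : Z ⊆ Ico α (Φ α)) (h : (B ∩ Z).Nonempty) (h' : (B' ∩ Z).Nonempty) : ¬δ < δ' := by
  intro hlt
  obtain ⟨z, hzB, hzZ⟩ := h
  obtain ⟨z', hzB', hzZ'⟩ := h'
  have hz : z < δ' := (hB hzB).trans (hδ' δ hlt)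
  have hz' : z' < δ' := (hZ hzZ').2.trans (hδ' α (((hZ hzZ).1).trans_lt hz))
  exact (hB' hzB').not_gt hz'

namespace IsQStar

variable {κ : Cardinal.{0}} {r s : Set (Ordinal × Set Ordinal × Set (Set Ordinal))}
  {t : Ordinal × Set Ordinal × Set (Set Ordinal)}

theorem fst_lt_ord (hr : IsQStar κ r) (ht : t ∈ r) : t.1 < κ.ord :=
  (hr.1 t ht).1

theorem subset_Ico (hr : IsQStar κ r) (ht : t ∈ r) : t.2.1 ⊆ Ico t.1 κ.ord :=
  (hr.1 t ht).2.1

theorem isUltrafilterOn (hr : IsQStar κ r) (ht : t ∈ r) : IsUltrafilterOn t.2.1 t.2.2 :=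
  (hr.1 t ht).2.2.2.2.1

theorem mk_fst_le_lt (hκ : κ.IsRegular) (hr : IsQStar κ r) {e : Ordinal} (he : e < κ.ord) :
    #{t | t ∈ r ∧ t.1 ≤ e} < Cardinal.lift.{1} κ := by
  have hunion : {t | t ∈ r ∧ t.1 ≤ e} = ⋃ ξ ∈ Iic e, {t | t ∈ r ∧ t.1 = ξ} := by
    ext t
    simp
  rw [hunion, card_biUnion_lt_iff_forall_of_isRegular hκ.lift]
  · exact fun ξ hξ => hr.2.1 ξ (hξ.trans_lt he)
  · rw [← Order.Iio_succ, mk_Iio_ordinal, Cardinal.lift_lt, ← lt_ord]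
    exact (isSuccLimit_ord hκ.aleph0_le).succ_lt he

theorem exists_bound_of_fst_le (hκ : κ.IsRegular) (hr : IsQStar κ r) {e : Ordinal}
    (he : e < κ.ord) : ∃ b < κ.ord, ∀ t ∈ r, t.1 ≤ e → t.2.1 ⊆ Iio b := by
  have hsub : (⋃ t ∈ {t | t ∈ r ∧ t.1 ≤ e}, t.2.1) ⊆ Iio κ.ord := by
    simp only [iUnion_subset_iff]
    exact fun t ht z hz => (hr.subset_Ico ht.1 hz).2
  have hcard : #(⋃ t ∈ {t | t ∈ r ∧ t.1 ≤ e}, t.2.1) < Cardinal.lift.{1} κ := by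
    rw [card_biUnion_lt_iff_forall_of_isRegular hκ.lift (hr.mk_fst_le_lt hκ he)]
    exact fun t ht => (hr.1 t ht.1).2.2.2.1
  obtain ⟨b, hb, hUb⟩ := hκ.exists_lt_ord_subset_Iio hsub hcard
  refine ⟨b, hb, fun t ht hte z hz => hUb ?_⟩
  exact mem_biUnion (show t ∈ {t | t ∈ r ∧ t.1 ≤ e} from ⟨ht, hte⟩) hz

theorem diff_biUnion_mem_filStar (hκ : κ.IsRegular) (hr : IsQStar κ r) {Φ : Ordinal → Ordinal}
    {D : Set Ordinal} {B : Ordinal → Set Ordinal} (hZ : ∀ t ∈ r, t.2.1 ⊆ Iio (Φ t.1))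
    (hD : ∀ δ ∈ D, ∀ e < δ, Φ e < δ) (hB : ∀ δ ∈ D, B δ ⊆ Ioo δ (Φ δ))
    (hBr : ∀ δ ∈ D, ∀ t ∈ r, B δ ∩ t.2.1 ∉ t.2.2) :
    Iio κ.ord \ ⋃ δ ∈ D, B δ ∈ filStar κ r := by
  have hmeet : ∀ t ∈ r, ∀ δ ∈ D, ∀ δ' ∈ D,
      (B δ ∩ t.2.1).Nonempty → (B δ' ∩ t.2.1).Nonempty → δ = δ' := by
    intro t ht δ hδ δ' hδ' h h'
    have hZt : t.2.1 ⊆ Ico t.1 (Φ t.1) := fun z hz => ⟨(hr.subset_Ico ht hz).1, hZ t ht hz⟩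
    refine le_antisymm (not_lt.1 ?_) (not_lt.1 ?_)
    · exact not_lt_of_inter_nonempty (hD δ hδ) (fun z hz => (hB δ' hδ' hz).2)
        (fun z hz => (hB δ hδ hz).1) hZt h' h
    · exact not_lt_of_inter_nonempty (hD δ' hδ') (fun z hz => (hB δ hδ hz).2)
        (fun z hz => (hB δ' hδ' hz).1) hZt h h'
  refine ⟨sdiff_subset, 0, hκ.ord_pos, fun t ht _ => ?_⟩
  have hd := hr.isUltrafilterOn ht
  suffices ∃ C ∈ t.2.2, C ⊆ (Iio κ.ord \ ⋃ δ ∈ D, B δ) ∩ t.2.1 by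
    obtain ⟨C, hC, hCX⟩ := this
    exact hd.2.2.2.1 C _ hC hCX inter_subset_right
  by_cases h : ∃ δ ∈ D, (B δ ∩ t.2.1).Nonempty
  · obtain ⟨δ, hδ, hδZ⟩ := h
    refine ⟨t.2.1 \ B δ, hd.diff_mem_of_inter_notMem (hBr δ hδ t ht), ?_⟩
    rintro z ⟨hzZ, hzB⟩
    refine ⟨⟨(hr.subset_Ico ht hzZ).2, ?_⟩, hzZ⟩
    simp only [mem_iUnion, not_exists]
    intro δ' hδ' hzB'
    exact hzB (hmeet t ht δ hδ δ' hδ' hδZ ⟨z, hzB', hzZ⟩ ▸ hzB')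
  · refine ⟨t.2.1, hd.2.1, fun z hz => ⟨⟨(hr.subset_Ico ht hz).2, ?_⟩, hz⟩⟩
    simp only [mem_iUnion, not_exists]
    exact fun δ hδ hzB => h ⟨δ, hδ, z, hzB, hz⟩

theorem exists_mem_filStar_forall_disjoint (hκ : κ.IsRegular) (hκ₀ : ℵ₀ < κ) (hr : IsQStar κ r)
    {B : Ordinal → Set Ordinal} (hB : ∀ e < κ.ord, ∃ b < κ.ord, B e ⊆ Ioo e b)
    (hBr : ∀ e < κ.ord, ∀ t ∈ r, B e ∩ t.2.1 ∉ t.2.2) :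
    ∃ X ∈ filStar κ r, ∀ ε < κ.ord, ∃ e, ε ≤ e ∧ e < κ.ord ∧ Disjoint X (B e) := by
  have hbound : ∀ e < κ.ord, ∃ b < κ.ord, B e ⊆ Ioo e b ∧ ∀ t ∈ r, t.1 ≤ e → t.2.1 ⊆ Iio b := by
    intro e he
    obtain ⟨b₁, hb₁, hB₁⟩ := hB e he
    obtain ⟨b₂, hb₂, hZ₂⟩ := hr.exists_bound_of_fst_le hκ he
    exact ⟨max b₁ b₂, max_lt hb₁ hb₂, hB₁.trans (Ioo_subset_Ioo_right (le_max_left _ _)),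
      fun t ht hte => (hZ₂ t ht hte).trans (Iio_subset_Iio (le_max_right _ _))⟩
  choose! Φ hΦκ hBΦ hZΦ using hbound
  let D := {δ | δ < κ.ord ∧ ∀ e < δ, Φ e < δ}
  have hX : Iio κ.ord \ ⋃ δ ∈ D, B δ ∈ filStar κ r :=
    hr.diff_biUnion_mem_filStar hκ (fun t ht => hZΦ t.1 (hr.fst_lt_ord ht) t ht le_rfl)
      (fun δ hδ => hδ.2) (fun δ hδ => hBΦ δ hδ.1) (fun δ hδ => hBr δ hδ.1)
  refine ⟨_, hX, fun ε hε => ?_⟩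
  obtain ⟨δ, hεδ, hδ, hδD⟩ := hκ.exists_closure_point hκ₀ hΦκ hε
  exact ⟨δ, hεδ, hδ, disjoint_sdiff_left.mono_right (subset_biUnion_of_mem (u := B)
    (show δ ∈ D from ⟨hδ, hδD⟩))⟩

theorem exists_forall_exists_of_filStar_subset (hκ : κ.IsRegular) (hκ₀ : ℵ₀ < κ)
    (hr : IsQStar κ r) (hs : IsQStar κ s) (hsub : filStar κ r ⊆ filStar κ s) :
    ∃ ε < κ.ord, ∀ t ∈ s, ε < t.1 → ∀ A ∈ t.2.2, ∃ t' ∈ r, A ∩ t'.2.1 ∈ t'.2.2 := by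
  by_contra! hno
  choose! T hTs hTfst A hA hAr using hno
  have hAbound : ∀ e < κ.ord, ∃ b < κ.ord, A e ⊆ Ioo e b := by
    intro e he
    obtain ⟨b, hb, hZb⟩ := hs.exists_bound_of_fst_le hκ (hs.fst_lt_ord (hTs e he))
    refine ⟨b, hb, fun z hz => ?_⟩
    have hzZ := (hs.isUltrafilterOn (hTs e he)).1 _ (hA e he) hz
    exact ⟨(hTfst e he).trans_le (hs.subset_Ico (hTs e he) hzZ).1, hZb _ (hTs e he) le_rfl hzZ⟩
  obtain ⟨X, hXr, hX⟩ := hr.exists_mem_filStar_forall_disjoint hκ hκ₀ hAbound hAr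
  obtain ⟨-, ε, hε, hXs⟩ := hsub hXr
  obtain ⟨e, hεe, he, hdisj⟩ := hX ε hε
  obtain ⟨z, ⟨hzX, -⟩, hzA⟩ := (hs.isUltrafilterOn (hTs e he)).inter_nonempty
    (hXs _ (hTs e he) (hεe.trans (hTfst e he).le)) (hA e he)
  exact disjoint_left.1 hdisj hzX hzA

theorem filStar_subset_of_exists_forall_exists (hκ : κ.IsRegular) (hr : IsQStar κ r)
    (hs : IsQStar κ s)
    (h : ∃ ε < κ.ord, ∀ t ∈ s, ε < t.1 → ∀ A ∈ t.2.2, ∃ t' ∈ r, A ∩ t'.2.1 ∈ t'.2.2) :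
    filStar κ r ⊆ filStar κ s := by
  obtain ⟨ε, hε, hP⟩ := h
  rintro A ⟨hAκ, ε₀, hε₀, hA⟩
  obtain ⟨b, hb, hZb⟩ := hr.exists_bound_of_fst_le hκ hε₀
  refine ⟨hAκ, max b (Order.succ ε),
    max_lt hb ((isSuccLimit_ord hκ.aleph0_le).succ_lt hε), fun t ht hle => ?_⟩
  by_contra hnot
  have hεt : ε < t.1 := (Order.lt_succ ε).trans_le ((le_max_right _ _).trans hle)
  obtain ⟨t', ht', hmem⟩ := hP t ht hεt _ ((hs.isUltrafilterOn ht).diff_mem_of_inter_notMem hnot)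
  have hd' := hr.isUltrafilterOn ht'
  obtain ⟨z, ⟨hzZ, -⟩, hzZ'⟩ := hd'.nonempty_of_mem hmem
  have hε₀t' : ε₀ ≤ t'.1 := by
    by_contra! hlt
    exact (hZb t' ht' hlt.le hzZ').not_ge
      (((le_max_left _ _).trans hle).trans (hs.subset_Ico ht hzZ).1)
  obtain ⟨w, ⟨hwA, -⟩, ⟨-, hwA'⟩, -⟩ := hd'.inter_nonempty (hA t' ht' hε₀t') hmem
  exact hwA' hwA

end IsQStar

/-- For `r, s ∈ Q*_λ`: `fil*(r) ⊆ fil*(s)` iff there is `ε < λ` such that for every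
`(α,Z,d) ∈ s` with `α > ε` and every `A ∈ d` there is `(α',Z',d') ∈ r` with `A ∩ Z' ∈ d'`. -/
theorem statement8 (κ : Cardinal.{0}) (hreg : κ.IsRegular) (hunc : Cardinal.aleph0 < κ)
    (r s : Set (Ordinal × Set Ordinal × Set (Set Ordinal)))
    (hr : IsQStar κ r) (hs : IsQStar κ s) :
    filStar κ r ⊆ filStar κ s ↔
      ∃ ε < κ.ord, ∀ t ∈ s, ε < t.1 → ∀ A ∈ t.2.2, ∃ t' ∈ r, A ∩ t'.2.1 ∈ t'.2.2 :=
  ⟨hr.exists_forall_exists_of_filStar_subset hreg hunc hs,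
    hr.filStar_subset_of_exists_forall_exists hreg hs⟩
end
end

section
/- The forcing notion P* is (<λ)-complete: every ≤-increasing sequence ⟨p_ξ : ξ < δ⟩ of conditions in P*, with δ < λ, has an upper bound in P*. -/
/-!
The upper bound has club `C = ⋂ ξ < δ, C^{p_ξ}`, a club because `δ < cf λ` and `λ` is
uncountable. The key reformulation (`pLe_iff`) is that `p ≤ q` says exactly `C^q ⊆ C^p` and that
`q` and `p` have the same signs relative to the first points of the `C^p`-blocks (`relSign`).
Below a fixed `γ`, the last point of `C^{p_ζ}` eventually lies in `C`, so the sign of `p_ζ` at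
`γ` relative to `C` is eventually constant in `ζ`; these eventual values define `η^q`. Renormalising
`η^q` along the finer club `C^{p_ξ}` then gives the relative signs of a late `p_ζ`, which are those
of `p_ξ`.
-/

open Set

noncomputable section

/-- A condition in the forcing `P*`: a function `η : λ → {-1, 1}` together with a
club `C` of `λ`. -/
structure PStar (lam : Ordinal) where
  η : Ordinal → ℤ
  C : Set Ordinal
  pm : ∀ α < lam, η α = 1 ∨ η α = -1
  club : IsClubIn C lam

/-- The order of `P*`: `p ≤ q` iff `C^q ⊆ C^p`, `η^q` agrees with `η^p` below `min C^p`,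
and for successive `α < β` in `C^p` and `γ ∈ [α,β)`, `η^q(γ) = (η^p(α)/η^q(α))·η^p(γ)`. -/
def PLe {lam : Ordinal} (p q : PStar lam) : Prop :=
  q.C ⊆ p.C ∧ (∀ γ < sInf p.C, q.η γ = p.η γ) ∧
  ∀ α ∈ p.C, ∀ γ ∈ Ico α (nextIn p.C α), q.η γ = (p.η α / q.η α) * p.η γ

open Cardinal

theorem Int.eq_div_mul_iff_mul_eq {a b c d : ℤ} (ha : IsUnit a) (hb : IsUnit b) :
    d = a / b * c ↔ d * b = c * a := by
  rcases Int.isUnit_iff.1 ha with rfl | rfl <;> rcases Int.isUnit_iff.1 hb with rfl | rfl <;>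
    omega

theorem PStar.isUnit_η {lam : Ordinal} (p : PStar lam) {α : Ordinal} (hα : α < lam) :
    IsUnit (p.η α) :=
  Int.isUnit_iff.2 (p.pm α hα)

section Club

variable {C : Set Ordinal} {lam : Ordinal}

theorem IsClubIn.mem_of_cofinal (hC : IsClubIn C lam) {β : Ordinal} (hβ : β < lam) (hβ0 : β ≠ 0)
    (h : ∀ y < β, ∃ c ∈ C, y < c ∧ c < β) : β ∈ C := by
  refine hC.2.2 β hβ hβ0 (le_antisymm (csSup_le' fun x hx => hx.2.le) ?_)
  refine le_of_forall_lt fun y hy => ?_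
  obtain ⟨c, hc, hyc, hcβ⟩ := h y hy
  exact hyc.trans_le (le_csSup ⟨β, fun x hx => hx.2.le⟩ ⟨hc, hcβ⟩)

theorem IsClubIn.nonempty_diff_Iic (hC : IsClubIn C lam) {β : Ordinal} (hβ : β < lam) :
    (C \ Iic β).Nonempty := by
  obtain ⟨c, hc, hβc⟩ := hC.2.1 β hβ
  exact ⟨c, hc, not_le.2 hβc⟩

theorem IsClubIn.nextIn_mem (hC : IsClubIn C lam) {β : Ordinal} (hβ : β < lam) :
    nextIn C β ∈ C :=
  (csInf_mem (hC.nonempty_diff_Iic hβ)).1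

theorem IsClubIn.lt_nextIn (hC : IsClubIn C lam) {β : Ordinal} (hβ : β < lam) :
    β < nextIn C β :=
  not_le.1 (csInf_mem (hC.nonempty_diff_Iic hβ)).2

theorem nextIn_le_s10 {β x : Ordinal} (hx : x ∈ C) (hβx : β < x) : nextIn C β ≤ x :=
  csInf_le' ⟨hx, not_le.2 hβx⟩

theorem isGreatest_inter_Iic_of_mem_Ico {α γ : Ordinal} (hα : α ∈ C)
    (hγ : γ ∈ Ico α (nextIn C α)) : IsGreatest (C ∩ Iic γ) α :=
  ⟨⟨hα, hγ.1⟩, fun _ hx => not_lt.1 fun hαx => (hγ.2.trans_le (nextIn_le_s10 hx.1 hαx)).not_ge hx.2⟩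

theorem IsClubIn.sSup_inter_Iic_mem (hC : IsClubIn C lam) {γ : Ordinal} (hγ : γ < lam)
    (hne : (C ∩ Iic γ).Nonempty) : sSup (C ∩ Iic γ) ∈ C := by
  have hbdd : BddAbove (C ∩ Iic γ) := ⟨γ, fun x hx => hx.2⟩
  by_contra hnot
  have hlt : ∀ x ∈ C ∩ Iic γ, x < sSup (C ∩ Iic γ) := fun x hx =>
    (le_csSup hbdd hx).lt_of_ne fun h => hnot (h ▸ hx.1)
  refine hnot (hC.mem_of_cofinal ((csSup_le' fun x hx => hx.2).trans_lt hγ) ?_ fun y hy => ?_)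
  · obtain ⟨x, hx⟩ := hne
    exact (hlt x hx).ne_bot
  · obtain ⟨c, hc, hyc⟩ := exists_lt_of_lt_csSup' hy
    exact ⟨c, hc.1, hyc, hlt c hc⟩

theorem IsClubIn.mem_Ico_nextIn_sSup_inter_Iic (hC : IsClubIn C lam) {γ : Ordinal}
    (hγ : γ < lam) :
    γ ∈ Ico (sSup (C ∩ Iic γ)) (nextIn C (sSup (C ∩ Iic γ))) := by
  have hle : sSup (C ∩ Iic γ) ≤ γ := csSup_le' fun x hx => hx.2
  refine ⟨hle, not_le.1 fun hnext => ?_⟩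
  have hmem := hC.nextIn_mem (hle.trans_lt hγ)
  exact (hC.lt_nextIn (hle.trans_lt hγ)).not_ge (le_csSup ⟨γ, fun x hx => hx.2⟩ ⟨hmem, hnext⟩)

theorem inter_Iic_nonempty_iff_sInf_le (hC : C.Nonempty) {γ : Ordinal} :
    (C ∩ Iic γ).Nonempty ↔ sInf C ≤ γ :=
  ⟨fun ⟨_, hx, hxγ⟩ => (csInf_le' hx).trans hxγ, fun h => ⟨sInf C, csInf_mem hC, h⟩⟩

end Club

open Classical in
/-- The sign of `η` at `γ` relative to the start of the block of `D` containing `γ`; below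
`min D`, where `γ` lies in no block, it is `η γ` itself. -/
def relSign (η : Ordinal → ℤ) (D : Set Ordinal) (γ : Ordinal) : ℤ :=
  if (D ∩ Iic γ).Nonempty then η γ * η (sSup (D ∩ Iic γ)) else η γ

theorem relSign_isUnit {η : Ordinal → ℤ} {γ : Ordinal} (hη : ∀ α ≤ γ, IsUnit (η α))
    (D : Set Ordinal) : IsUnit (relSign η D γ) := by
  unfold relSign
  split_ifs
  · exact (hη γ le_rfl).mul (hη _ (csSup_le' fun _ hx => hx.2))
  · exact hη γ le_rfl

theorem relSign_congr {η η' : Ordinal → ℤ} {D : Set Ordinal} {γ : Ordinal} (hγ : η γ = η' γ)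
    (hbase : η (sSup (D ∩ Iic γ)) = η' (sSup (D ∩ Iic γ))) : relSign η D γ = relSign η' D γ := by
  simp only [relSign, hγ, hbase]

theorem relSign_eq_of_subset_lowerClosure {η : Ordinal → ℤ} {C D : Set Ordinal} {γ : Ordinal}
    (hCD : C ⊆ D) (hdom : D ∩ Iic γ ⊆ lowerClosure (C ∩ Iic γ)) :
    relSign η D γ = relSign η C γ := by
  have hsub : C ∩ Iic γ ⊆ D ∩ Iic γ := inter_subset_inter_left _ hCD
  by_cases hC : (C ∩ Iic γ).Nonempty
  · have hbdd {E : Set Ordinal} : BddAbove (E ∩ Iic γ) := ⟨γ, fun _ hx => hx.2⟩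
    have hsSup : sSup (D ∩ Iic γ) = sSup (C ∩ Iic γ) := by
      refine le_antisymm (csSup_le' fun x hx => ?_) (csSup_le_csSup hbdd hC hsub)
      obtain ⟨c, hc, hxc⟩ := mem_lowerClosure.1 (hdom hx)
      exact hxc.trans (le_csSup hbdd hc)
    simp only [relSign, if_pos hC, if_pos (hC.mono hsub), hsSup]
  · have hD : ¬ (D ∩ Iic γ).Nonempty := fun ⟨x, hx⟩ => by
      obtain ⟨c, hc, -⟩ := mem_lowerClosure.1 (hdom hx)
      exact hC ⟨c, hc⟩
    simp only [relSign, if_neg hC, if_neg hD]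

/-- The `D`-block of `γ` lies inside a single `C`-block, so the two `C`-factors cancel. -/
theorem relSign_relSign_of_subset {η : Ordinal → ℤ} {C D : Set Ordinal} {γ : Ordinal}
    (hη : ∀ α ≤ γ, IsUnit (η α)) (hCD : C ⊆ D) :
    relSign (relSign η C) D γ = relSign η D γ := by
  by_cases hD : (D ∩ Iic γ).Nonempty
  · have hbγ : sSup (D ∩ Iic γ) ≤ γ := csSup_le' fun _ hx => hx.2
    have hsame : C ∩ Iic (sSup (D ∩ Iic γ)) = C ∩ Iic γ := by
      refine subset_antisymm (inter_subset_inter_right _ (Iic_subset_Iic.2 hbγ)) ?_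
      exact fun x hx => ⟨hx.1, le_csSup ⟨γ, fun _ hy => hy.2⟩ ⟨hCD hx.1, hx.2⟩⟩
    simp only [relSign, if_pos hD]
    rw [hsame]
    split_ifs
    · have hsq : η (sSup (C ∩ Iic γ)) * η (sSup (C ∩ Iic γ)) = 1 :=
        Int.isUnit_mul_self (hη _ (csSup_le' fun _ hx => hx.2))
      linear_combination (η γ * η (sSup (D ∩ Iic γ))) * hsq
    · rfl
  · have hC : ¬ (C ∩ Iic γ).Nonempty := fun h => hD (h.mono (inter_subset_inter_left _ hCD))
    simp only [relSign, if_neg hD, if_neg hC]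

theorem pLe_iff {lam : Ordinal} {p q : PStar lam} :
    PLe p q ↔ q.C ⊆ p.C ∧ ∀ γ < lam, relSign q.η p.C γ = relSign p.η p.C γ := by
  refine and_congr_right fun _ => ⟨fun ⟨hinit, hblock⟩ γ hγ => ?_, fun h => ⟨?_, ?_⟩⟩
  · unfold relSign
    split_ifs with hne
    · have hα := p.club.sSup_inter_Iic_mem hγ hne
      have hαlam := p.club.1 hα
      exact (Int.eq_div_mul_iff_mul_eq (p.isUnit_η hαlam) (q.isUnit_η hαlam)).1
        (hblock _ hα γ (p.club.mem_Ico_nextIn_sSup_inter_Iic hγ))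
    · have hCne : p.C.Nonempty := (p.club.nonempty_diff_Iic hγ).mono sdiff_subset
      exact hinit γ (not_le.1 fun h => hne ((inter_Iic_nonempty_iff_sInf_le hCne).2 h))
  · intro γ hγ
    have hCne : p.C.Nonempty := nonempty_iff_ne_empty.2 fun h => by simp [h] at hγ
    have hempty : ¬ (p.C ∩ Iic γ).Nonempty := fun h' =>
      (inter_Iic_nonempty_iff_sInf_le hCne).1 h' |>.not_gt hγ
    simpa [relSign, hempty] using h γ (hγ.trans (p.club.1 (csInf_mem hCne)))
  · intro α hα γ hγ
    have hαlam := p.club.1 hα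
    have hG := isGreatest_inter_Iic_of_mem_Ico hα hγ
    have hrel := h γ (hγ.2.trans (p.club.1 (p.club.nextIn_mem hαlam)))
    simp only [relSign, hG.csSup_eq, if_pos (show (p.C ∩ Iic γ).Nonempty from ⟨α, hG.1⟩)] at hrel
    exact (Int.eq_div_mul_iff_mul_eq (p.isUnit_η hαlam) (q.isUnit_η hαlam)).2 hrel

theorem IsClubIn.biInter {lam δ : Ordinal} (hlam : ℵ₀ < lam.cof) (hδ : δ.card < lam.cof)
    (hδ0 : δ ≠ 0) {C : Ordinal → Set Ordinal} (hC : ∀ ξ < δ, IsClubIn (C ξ) lam) :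
    IsClubIn (⋂ ξ < δ, C ξ) lam := by
  have hδpos : 0 < δ := pos_iff_ne_zero.2 hδ0
  refine ⟨fun x hx => (hC 0 hδpos).1 (mem_iInter₂.1 hx 0 hδpos), fun β hβ => ?_,
    fun β hβ hβ0 hsup => mem_iInter₂.2 fun ξ hξ => (hC ξ hξ).mem_of_cofinal hβ hβ0 fun y hy => ?_⟩
  · let F : Ordinal → Ordinal := fun x => ⨆ ξ : Iio δ, nextIn (C ξ) x
    have hF_lt : ∀ x < lam, F x < lam := fun x hx =>
      Ordinal.lift_iSup_lt_of_lt_cof (by simpa [← Ordinal.lift_card, ← Ordinal.lift_cof] using hδ)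
        fun ξ => (hC ξ ξ.2).1 ((hC ξ ξ.2).nextIn_mem hx)
    have hnext_le : ∀ ξ < δ, ∀ x, nextIn (C ξ) x ≤ F x := fun ξ hξ x =>
      le_ciSup (Ordinal.bddAbove_of_small) (⟨ξ, hξ⟩ : Iio δ)
    have hlt_F : ∀ x < lam, x < F x := fun x hx =>
      ((hC 0 hδpos).lt_nextIn hx).trans_le (hnext_le 0 hδpos x)
    have hb : Ordinal.nfp F β < lam := Ordinal.nfp_lt_ord hlam hF_lt hβ
    have hiter_lt : ∀ n, F^[n] β < lam := fun n => (Ordinal.iterate_le_nfp F β n).trans_lt hb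
    have hβb : β < Ordinal.nfp F β := (hlt_F β hβ).trans_le (Ordinal.iterate_le_nfp F β 1)
    refine ⟨Ordinal.nfp F β, mem_iInter₂.2 fun ξ hξ => ?_, hβb⟩
    refine (hC ξ hξ).mem_of_cofinal hb hβb.ne_bot fun y hy => ?_
    obtain ⟨n, hn⟩ := Ordinal.lt_nfp_iff.1 hy
    refine ⟨nextIn (C ξ) (F^[n] β), (hC ξ hξ).nextIn_mem (hiter_lt n),
      hn.trans ((hC ξ hξ).lt_nextIn (hiter_lt n)), ?_⟩
    calc nextIn (C ξ) (F^[n] β) ≤ F^[n + 1] β := by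
          rw [Function.iterate_succ_apply']; exact hnext_le ξ hξ _
      _ < F^[n + 2] β := by
          rw [Function.iterate_succ_apply' F (n + 1)]; exact hlt_F _ (hiter_lt _)
      _ ≤ Ordinal.nfp F β := Ordinal.iterate_le_nfp F β _
  · obtain ⟨c, hc, hyc⟩ := exists_lt_of_lt_csSup' (hsup ▸ hy)
    exact ⟨c, mem_iInter₂.1 hc.1 ξ hξ, hyc, hc.2⟩

/-- The maxima `sSup (C ξ ∩ Iic γ)` decrease in `ξ`, hence stabilise, and the stable value lies
in every `C ξ`. -/
theorem exists_inter_Iic_subset_lowerClosure_biInter {lam δ γ : Ordinal}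
    {C : Ordinal → Set Ordinal} (hC : ∀ ξ < δ, IsClubIn (C ξ) lam)
    (hanti : ∀ ξ ζ, ξ ≤ ζ → ζ < δ → C ζ ⊆ C ξ) (hδ0 : δ ≠ 0) (hγ : γ < lam) :
    ∃ σ < δ, ∀ ζ, σ ≤ ζ → ζ < δ → C ζ ∩ Iic γ ⊆ lowerClosure ((⋂ ξ < δ, C ξ) ∩ Iic γ) := by
  by_cases hne : ∀ ξ < δ, (C ξ ∩ Iic γ).Nonempty
  · have hbdd {E : Set Ordinal} : BddAbove (E ∩ Iic γ) := ⟨γ, fun _ hx => hx.2⟩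
    let m ξ := sSup (C ξ ∩ Iic γ)
    obtain ⟨_, ⟨σ, hσ, rfl⟩, hmin⟩ :=
      Ordinal.lt_wf.has_min (m '' Iio δ) ⟨m 0, 0, pos_iff_ne_zero.2 hδ0, rfl⟩
    have hm_le : ∀ ζ, σ ≤ ζ → ζ < δ → m ζ ≤ m σ := fun ζ hσζ hζ =>
      csSup_le_csSup hbdd (hne ζ hζ) (inter_subset_inter_left _ (hanti σ ζ hσζ hζ))
    have hmσ : m σ ∈ ⋂ ξ < δ, C ξ := mem_iInter₂.2 fun ξ hξ => by
      rcases le_total ξ σ with hξσ | hσξ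
      · exact hanti ξ σ hξσ hσ ((hC σ hσ).sSup_inter_Iic_mem hγ (hne σ hσ))
      · rw [← (hm_le ξ hσξ hξ).antisymm (not_lt.1 (hmin _ ⟨ξ, hξ, rfl⟩))]
        exact (hC ξ hξ).sSup_inter_Iic_mem hγ (hne ξ hξ)
    have hmσγ : m σ ≤ γ := csSup_le' fun _ h => h.2
    exact ⟨σ, hσ, fun ζ hσζ hζ x hx => mem_lowerClosure.2
      ⟨m σ, ⟨hmσ, hmσγ⟩, (le_csSup hbdd hx).trans (hm_le ζ hσζ hζ)⟩⟩
  · push Not at hne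
    obtain ⟨σ, hσ, hempty⟩ := hne
    refine ⟨σ, hσ, fun ζ hσζ hζ x hx => ?_⟩
    exact absurd (hempty ▸ ⟨hanti σ ζ hσζ hζ hx.1, hx.2⟩ : x ∈ (∅ : Set Ordinal)) (notMem_empty x)

theorem exists_relSign_biInter_stable {lam δ : Ordinal} {p : Ordinal → PStar lam}
    (hmono : ∀ ξ ζ, ξ ≤ ζ → ζ < δ → PLe (p ξ) (p ζ))
    (hδ0 : δ ≠ 0) {γ : Ordinal} (hγ : γ < lam) :
    ∃ σ < δ, ∀ ζ, σ ≤ ζ → ζ < δ →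
      relSign (p ζ).η (⋂ ξ < δ, (p ξ).C) γ = relSign (p σ).η (⋂ ξ < δ, (p ξ).C) γ := by
  obtain ⟨σ, hσ, hdom⟩ := exists_inter_Iic_subset_lowerClosure_biInter (fun ξ _ => (p ξ).club)
    (fun ξ ζ h hζ => (hmono ξ ζ h hζ).1) hδ0 hγ
  have hsub : (⋂ ξ < δ, (p ξ).C) ⊆ (p σ).C := biInter_subset_of_mem hσ
  refine ⟨σ, hσ, fun ζ hσζ hζ => ?_⟩
  calc relSign (p ζ).η (⋂ ξ < δ, (p ξ).C) γ = relSign (p ζ).η (p σ).C γ :=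
        (relSign_eq_of_subset_lowerClosure hsub (hdom σ le_rfl hσ)).symm
    _ = relSign (p σ).η (p σ).C γ := (pLe_iff.1 (hmono σ ζ hσζ hζ)).2 γ hγ
    _ = relSign (p σ).η (⋂ ξ < δ, (p ξ).C) γ :=
        relSign_eq_of_subset_lowerClosure hsub (hdom σ le_rfl hσ)

/-- `P*` is `(<λ)`-complete: every `≤`-increasing sequence of length `δ < λ` of
conditions in `P*` has an upper bound. -/
theorem statement10 (κ : Cardinal.{0}) (hinacc : κ.IsInaccessible)
    (δ : Ordinal) (hδ : δ < κ.ord) (p : Ordinal → PStar κ.ord)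
    (hmono : ∀ ξ ζ : Ordinal, ξ ≤ ζ → ζ < δ → PLe (p ξ) (p ζ)) :
    ∃ q : PStar κ.ord, ∀ ξ < δ, PLe (p ξ) q := by
  rcases eq_or_ne δ 0 with rfl | hδ0
  · exact ⟨p 0, fun ξ hξ => (not_lt_bot hξ).elim⟩
  set C := ⋂ ξ < δ, (p ξ).C
  have hcof : κ.ord.cof = κ := hinacc.isRegular.cof_ord
  have hC : IsClubIn C κ.ord := IsClubIn.biInter (by rw [hcof]; exact hinacc.aleph0_lt)
    (by rw [hcof]; exact Cardinal.lt_ord.1 hδ) hδ0 fun ξ _ => (p ξ).club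
  choose! σ hσδ hσ using fun γ (hγ : γ < κ.ord) => exists_relSign_biInter_stable hmono hδ0 hγ
  have hunit : ∀ ζ, ∀ γ < κ.ord, ∀ α ≤ γ, IsUnit ((p ζ).η α) :=
    fun ζ γ hγ α hα => (p ζ).isUnit_η (hα.trans_lt hγ)
  let q : PStar κ.ord :=
    { η := fun γ => relSign (p (σ γ)).η C γ
      C := C
      pm := fun γ hγ => Int.isUnit_iff.1 (relSign_isUnit (hunit _ γ hγ) C)
      club := hC }
  refine ⟨q, fun ξ hξ => pLe_iff.2 ⟨biInter_subset_of_mem hξ, fun γ hγ => ?_⟩⟩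
  set b := sSup ((p ξ).C ∩ Iic γ)
  have hb : b < κ.ord := (csSup_le' fun _ hx => hx.2).trans_lt hγ
  set ζ := max ξ (max (σ γ) (σ b))
  have hζ : ζ < δ := max_lt hξ (max_lt (hσδ γ hγ) (hσδ b hb))
  calc relSign q.η (p ξ).C γ = relSign (relSign (p ζ).η C) (p ξ).C γ :=
        relSign_congr (hσ γ hγ ζ (le_max_of_le_right (le_max_left _ _)) hζ).symm
          (hσ b hb ζ (le_max_of_le_right (le_max_right _ _)) hζ).symm
    _ = relSign (p ζ).η (p ξ).C γ :=
        relSign_relSign_of_subset (hunit ζ γ hγ) (biInter_subset_of_mem hξ)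
    _ = relSign (p ξ).η (p ξ).C γ := (pLe_iff.1 (hmono ξ ζ (le_max_left _ _) hζ)).2 γ hγ
end
end

section
/- Suppose p, q ∈ Q⁰_λ and there is ε < λ such that for every α ∈ C^q ∖ ε, letting β₀ = sup(C^p ∩ (α+1)) and β₁ = min(C^p ∖ min(C^q ∖ (α+1))), there is an ultrafilter e on [β₀, β₁) ∩ C^p with d^q_α = { A ∩ Z^q_α : A ∈ ⊕^e { d^p_β : β ∈ [β₀,β₁) ∩ C^p } }. Then p ≤⁰ q, i.e., fil(p) ⊆ fil(q). -/
open Set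

noncomputable section

/-- The sum `⊕^e_{x∈X} d_x` of the ultrafilters `d x` on `Z x` along an ultrafilter `e`
on `X`. -/
def eSum (X : Set Ordinal) (e : Set (Set Ordinal)) (Z : Ordinal → Set Ordinal)
    (d : Ordinal → Set (Set Ordinal)) : Set (Set Ordinal) :=
  {A | A ⊆ (⋃ x ∈ X, Z x) ∧ {x | x ∈ X ∧ Z x ∩ A ∈ d x} ∈ e}

/-!
Let `A ∈ fil p`, witnessed from some `ε₁` on, and fix `γ ∈ C^p` above `ε₁`. For `α ∈ C^q`
beyond `γ`, every index `β ∈ [β₀, β₁) ∩ C^p` of the sum satisfies `β ≥ β₀ ≥ γ`, so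
`A ∩ Z^p_β ∈ d^p_β`; hence `A ∩ ⋃_β Z^p_β` lies in the sum whatever `e` is. Since the blocks
`Z^p_β` cover `Z^q_α` (each `x ∈ Z^q_α` lies in `Z^p_β` for `β = sup(C^p ∩ (x+1))`), the trace of
that set on `Z^q_α` is `A ∩ Z^q_α`, which is therefore in `d^q_α`.
-/

theorem sSup_inter_Iic_le {T : Type*} [ConditionallyCompleteLinearOrderBot T] {s : Set T}
    (a : T) : sSup (s ∩ Iic a) ≤ a :=
  csSup_le' fun _ hx => hx.2

namespace IsClubIn

variable {C : Set Ordinal} {lam α β ν : Ordinal}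

theorem sSup_inter_Iic_mem_s15 (hC : IsClubIn C lam) (hα : α < lam)
    (hne : (C ∩ Iic α).Nonempty) : sSup (C ∩ Iic α) ∈ C := by
  set s := sSup (C ∩ Iic α)
  by_cases hs : s ∈ C ∩ Iic α
  · exact hs.1
  have hlt : ∀ x ∈ C ∩ Iic α, x < s := fun x hx =>
    (le_csSup bddAbove_Iic.inter_of_right hx).lt_of_ne (by rintro rfl; exact hs hx)
  -- `s` is not attained, so it is a limit of points of `C` and closure applies
  have heq : C ∩ Iio s = C ∩ Iic α := by
    ext x
    exact ⟨fun hx => ⟨hx.1, hx.2.le.trans (sSup_inter_Iic_le α)⟩, fun hx => ⟨hx.1, hlt x hx⟩⟩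
  obtain ⟨x, hx⟩ := hne
  exact hC.2.2 s ((sSup_inter_Iic_le α).trans_lt hα)
    (zero_le.trans_lt (hlt x hx)).ne' (by rw [heq])

theorem nextIn_mem_s15 (hC : IsClubIn C lam) (hβ : β < lam) : nextIn C β ∈ C \ Iic β :=
  csInf_mem (let ⟨δ, hδC, hβδ⟩ := hC.2.1 β hβ; ⟨δ, hδC, not_le.2 hβδ⟩)

theorem lt_nextIn_sSup_inter_Iic (hC : IsClubIn C lam) (hα : α < lam) :
    α < nextIn C (sSup (C ∩ Iic α)) := by
  have hnext := hC.nextIn_mem_s15 ((sSup_inter_Iic_le (s := C) α).trans_lt hα)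
  by_contra! hle
  exact hnext.2 (le_csSup bddAbove_Iic.inter_of_right ⟨hnext.1, hle⟩)

theorem le_sInf_diff_Iio (hC : IsClubIn C lam) (hν : ν < lam) : ν ≤ sInf (C \ Iio ν) :=
  le_csInf (let ⟨δ, hδC, hνδ⟩ := hC.2.1 ν hν; ⟨δ, hδC, not_lt.2 hνδ.le⟩)
    fun _ hy => not_lt.1 hy.2

theorem Ico_subset_biUnion_Ico_nextIn (hC : IsClubIn C lam) (hne : (C ∩ Iic α).Nonempty)
    (hν : ν < lam) :
    Ico α ν ⊆ ⋃ β ∈ Ico (sSup (C ∩ Iic α)) (sInf (C \ Iio ν)) ∩ C, Ico β (nextIn C β) := by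
  intro x ⟨hαx, hxν⟩
  have hx : x < lam := hxν.trans hν
  have hsub : C ∩ Iic α ⊆ C ∩ Iic x := fun y hy => ⟨hy.1, hy.2.trans hαx⟩
  refine mem_biUnion (x := sSup (C ∩ Iic x)) ⟨⟨?_, ?_⟩, ?_⟩ ⟨sSup_inter_Iic_le x, ?_⟩
  · exact csSup_le_csSup bddAbove_Iic.inter_of_right hne hsub
  · exact (sSup_inter_Iic_le x).trans_lt (hxν.trans_le (hC.le_sInf_diff_Iio hν))
  · exact hC.sSup_inter_Iic_mem_s15 hx (hne.mono hsub)
  · exact hC.lt_nextIn_sSup_inter_Iic hx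

end IsClubIn

theorem inter_biUnion_mem_eSum {X : Set Ordinal} {e : Set (Set Ordinal)}
    {Z : Ordinal → Set Ordinal} {d : Ordinal → Set (Set Ordinal)} {A : Set Ordinal}
    (hX : X ∈ e) (hA : ∀ x ∈ X, A ∩ Z x ∈ d x) : A ∩ ⋃ x ∈ X, Z x ∈ eSum X e Z d := by
  refine ⟨inter_subset_right, ?_⟩
  convert hX using 1
  ext x
  refine ⟨fun hx => hx.1, fun hx => ⟨hx, ?_⟩⟩
  rw [inter_left_comm, inter_eq_left.2 (subset_biUnion_of_mem hx)]
  exact hA x hx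

theorem statement15_general (κ : Cardinal.{0})
    (p q : QZero κ.ord)
    (h : ∃ ε < κ.ord, ∀ α ∈ q.C, ε ≤ α →
      ∃ e : Set (Set Ordinal),
        IsUltrafilterOn
          (Ico (sSup (p.C ∩ Iic α)) (sInf (p.C \ Iio (nextIn q.C α))) ∩ p.C) e ∧
        q.d α = {B : Set Ordinal |
          ∃ A ∈ eSum (Ico (sSup (p.C ∩ Iic α)) (sInf (p.C \ Iio (nextIn q.C α))) ∩ p.C)
              e p.Z p.d, B = A ∩ q.Z α}) :
    le0 p q := by
  obtain ⟨ε, hε, hsum⟩ := h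
  rintro A ⟨hAlam, ε₁, hε₁, hA⟩
  obtain ⟨γ, hγC, hε₁γ⟩ := p.club.2.1 ε₁ hε₁
  refine ⟨hAlam, max ε γ, max_lt hε (p.club.1 hγC), fun α hαC hα => ?_⟩
  obtain ⟨e, he, hd⟩ := hsum α hαC (le_of_max_le_left hα)
  have hγα : γ ∈ p.C ∩ Iic α := ⟨hγC, le_of_max_le_right hα⟩
  have hcover : q.Z α ⊆ _ := p.club.Ico_subset_biUnion_Ico_nextIn ⟨γ, hγα⟩
    (q.club.1 (q.club.nextIn_mem_s15 (q.club.1 hαC)).1)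
  have hγβ₀ : γ ≤ sSup (p.C ∩ Iic α) := le_csSup bddAbove_Iic.inter_of_right hγα
  rw [hd]
  refine ⟨_, inter_biUnion_mem_eSum he.2.1 fun β hβ => hA β hβ.2 ?_, ?_⟩
  · exact hε₁γ.le.trans (hγβ₀.trans hβ.1.1)
  · rw [inter_assoc]
    exact congrArg (A ∩ ·) (inter_eq_right.2 hcover).symm

/-- If for all large enough `α ∈ C^q` the ultrafilter `d^q_α` is (the trace on `Z^q_α` of)
a sum `⊕^e { d^p_β : β ∈ [β₀,β₁) ∩ C^p }` for some ultrafilter `e` on `[β₀,β₁) ∩ C^p`,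
where `β₀ = sup(C^p ∩ (α+1))` and `β₁ = min(C^p ∖ min(C^q ∖ (α+1)))`, then `p ≤⁰ q`. -/
theorem statement15 (κ : Cardinal.{0}) (hreg : κ.IsRegular) (hunc : Cardinal.aleph0 < κ)
    (p q : QZero κ.ord)
    (h : ∃ ε < κ.ord, ∀ α ∈ q.C, ε ≤ α →
      ∃ e : Set (Set Ordinal),
        IsUltrafilterOn
          (Ico (sSup (p.C ∩ Iic α)) (sInf (p.C \ Iio (nextIn q.C α))) ∩ p.C) e ∧
        q.d α = {B : Set Ordinal |
          ∃ A ∈ eSum (Ico (sSup (p.C ∩ Iic α)) (sInf (p.C \ Iio (nextIn q.C α))) ∩ p.C)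
              e p.Z p.d, B = A ∩ q.Z α}) :
    le0 p q :=
  statement15_general κ p q h
end
end

section
/- For any p ∈ P*, α ∈ C^p, and ν : α → {-1,1} obtained as η^q ↾ α for some q ≥ p (i.e. ν ∈ pos(p, α)), the pair ν *_α p = (ν ⌢ η^p↾[α,λ), C^p ∖ α) is an element of P* and is a condition stronger than p in P*. -/
open Set

noncomputable section

lemma IsClubIn.diff_Iio {C : Set Ordinal} {lam α : Ordinal} (hC : IsClubIn C lam)
    (hα : α < lam) : IsClubIn (C \ Iio α) lam := by
  refine ⟨fun x hx => hC.1 hx.1, fun β hβ => ?_, fun β hβ hβ0 hsup => ?_⟩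
  · obtain ⟨δ, hδC, hδ⟩ := hC.2.1 (max β α) (max_lt hβ hα)
    exact ⟨δ, ⟨hδC, not_lt.2 (le_max_right β α |>.trans hδ.le)⟩, (le_max_left β α).trans_lt hδ⟩
  have hbdd : ∀ S : Set Ordinal, BddAbove (S ∩ Iio β) := fun S => ⟨β, fun x hx => hx.2.le⟩
  obtain ⟨δ, hδ⟩ : ((C \ Iio α) ∩ Iio β).Nonempty := by
    by_contra h
    rw [not_nonempty_iff_eq_empty.1 h, csSup_empty] at hsup
    exact hβ0 hsup.symm
  have hαβ : α ≤ β := calc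
    α ≤ δ := not_lt.1 hδ.1.2
    _ ≤ sSup ((C \ Iio α) ∩ Iio β) := le_csSup (hbdd _) hδ
    _ = β := hsup
  refine ⟨hC.2.2 β hβ hβ0 (le_antisymm ?_ ?_), not_lt.2 hαβ⟩
  · exact csSup_le ⟨δ, hδ.1.1, hδ.2⟩ fun x hx => hx.2.le
  · calc β = sSup ((C \ Iio α) ∩ Iio β) := hsup.symm
      _ ≤ sSup (C ∩ Iio β) :=
        csSup_le_csSup (hbdd _) ⟨δ, hδ⟩ fun x hx => ⟨hx.1.1, hx.2⟩

lemma nextIn_le_s17 {C : Set Ordinal} {α β : Ordinal} (hα : α ∈ C) (hβα : β < α) :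
    nextIn C β ≤ α :=
  csInf_le (OrderBot.bddBelow _) ⟨hα, not_le.2 hβα⟩

namespace PStar

variable {lam : Ordinal}

lemma η_ne_zero (p : PStar lam) {α : Ordinal} (hα : α < lam) : p.η α ≠ 0 := by
  rcases p.pm α hα with h | h <;> simp [h]

/-- `graft q p α` is the paper's `(η^q ↾ α) *_α p`. -/
def graft (q p : PStar lam) (α : Ordinal) (hα : α < lam) : PStar lam where
  η γ := if γ < α then q.η γ else p.η γ
  C := p.C \ Iio α
  pm γ hγ := by
    split_ifs
    exacts [q.pm γ hγ, p.pm γ hγ]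
  club := p.club.diff_Iio hα

lemma le_graft {p q : PStar lam} {α : Ordinal} (hα : α ∈ p.C) (hpq : PLe p q) :
    PLe p (graft q p α (p.club.1 hα)) := by
  obtain ⟨-, hlow, hblock⟩ := hpq
  refine ⟨sdiff_subset, fun γ hγ => ?_, fun β hβ γ hγ => ?_⟩
  · have hγα : γ < α := hγ.trans_le (csInf_le (OrderBot.bddBelow _) hα)
    simpa [graft, hγα] using hlow γ hγ
  -- Since `α ∈ C^p`, every block `[β, nextIn β)` lies entirely on one side of `α`.
  rcases lt_or_ge β α with hβα | hαβ
  · have hγα : γ < α := hγ.2.trans_le (nextIn_le_s17 hα hβα)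
    simpa [graft, hγα, hβα] using hblock β hβ γ hγ
  · have hγα : ¬γ < α := not_lt.2 (hαβ.trans hγ.1)
    simp [graft, hγα, not_lt.2 hαβ, Int.ediv_self (p.η_ne_zero (p.club.1 hβ))]

end PStar

theorem statement17_general (κ : Cardinal.{0})
    (p q : PStar κ.ord) (α : Ordinal) (hα : α ∈ p.C) (hpq : PLe p q) :
    ∃ s : PStar κ.ord,
      (∀ γ : Ordinal, s.η γ = if γ < α then q.η γ else p.η γ) ∧
      s.C = p.C \ Iio α ∧ PLe p s :=
  ⟨PStar.graft q p α (p.club.1 hα), fun _ => rfl, rfl, PStar.le_graft hα hpq⟩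

/-- For `p ∈ P*`, `α ∈ C^p` and `ν = η^q ↾ α` for some `q ≥ p` (i.e. `ν ∈ pos(p,α)`),
the pair `ν *_α p = (ν ⌢ η^p↾[α,λ), C^p ∖ α)` is an element of `P*` stronger than `p`. -/
theorem statement17 (κ : Cardinal.{0}) (hinacc : κ.IsInaccessible)
    (p q : PStar κ.ord) (α : Ordinal) (hα : α ∈ p.C) (hpq : PLe p q) :
    ∃ s : PStar κ.ord,
      (∀ γ : Ordinal, s.η γ = if γ < α then q.η γ else p.η γ) ∧
      s.C = p.C \ Iio α ∧ PLe p s :=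
  statement17_general κ p q α hα hpq
end
end
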